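/- Let a ∈ ℝ, λ > 1, and let f : ℝ → ℝ be continuously differentiable with f'(x₀) = −c for some x₀ ∈ ℝ and some c > 0. Let T_* = T_*(a,λ,c) be the shock time. If T ∈ (0,∞] and φ : ℝ × [0,T) → ℝ is a classical solution of the damped Burgers equation with initial data f, then T ≤ T_*. In particular, no global-in-time classical solution exists when the initial slope is somewhere negative. -/

import Mathlib

/-- `B(t) = ∫₀ᵗ A(s)⁻¹ ds = ∫₀ᵗ exp((a/(λ−1))·((1+s)^(1−λ) − 1)) ds`. -/
noncomputable def dampB (a lam t : ℝ) : ℝ :=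
  ∫ s in (0:ℝ)..t, Real.exp (a / (lam - 1) * ((1 + s) ^ (1 - lam) - 1))

/-- `φ : ℝ × I → ℝ` (written in curried form `φ x t`) is a classical (C¹) solution of the
damped Burgers equation `∂_t φ + φ ∂_x φ = −a·φ/(1+t)^λ` on the time interval `I`,
with initial data `f`; `φx` and `φt` are its (continuous) partial derivatives. -/
def IsDampedBurgersSol (a lam : ℝ) (f : ℝ → ℝ) (I : Set ℝ) (φ φx φt : ℝ → ℝ → ℝ) : Prop :=
  (∀ x : ℝ, φ x 0 = f x) ∧
  (∀ x : ℝ, ∀ t ∈ I, HasDerivAt (fun y => φ y t) (φx x t) x) ∧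
  (∀ x : ℝ, ∀ t ∈ I, HasDerivWithinAt (fun s => φ x s) (φt x t) I t) ∧
  ContinuousOn (fun p : ℝ × ℝ => φ p.1 p.2) (Set.univ ×ˢ I) ∧
  ContinuousOn (fun p : ℝ × ℝ => φx p.1 p.2) (Set.univ ×ˢ I) ∧
  ContinuousOn (fun p : ℝ × ℝ => φt p.1 p.2) (Set.univ ×ˢ I) ∧
  (∀ x : ℝ, ∀ t ∈ I, φt x t + φ x t * φx x t = -a * φ x t / (1 + t) ^ lam)

/-!
Along the curve `t ↦ y + f y * B t` the function `h = φ * A - f y` solves the linear equation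
`h' = -φₓ h` with `h 0 = 0`, so Grönwall's inequality gives `φ = f y / A` there: these curves
are characteristics, and two of them can only meet if they start at the same point.
If `T_* < t₁ < T`, the slope `f' x₀ = -c < -1 / B t₁` yields a point `y > x₀` with
`(f y - f x₀) / (y - x₀) < -1 / B t₁`, and the characteristics from `x₀` and `y` meet at the time
`s ≤ t₁` where `B s = (y - x₀) / (f x₀ - f y)`.
-/

open Set Filter Topology Asymptotics

noncomputable def dampA (a lam t : ℝ) : ℝ :=
  Real.exp (a / (lam - 1) * (1 - (1 + t) ^ (1 - lam)))

section DampingFactor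

variable {a lam t : ℝ}

lemma dampA_zero (a lam : ℝ) : dampA a lam 0 = 1 := by simp [dampA]

lemma dampA_pos (a lam t : ℝ) : 0 < dampA a lam t := Real.exp_pos _

lemma inv_dampA (a lam t : ℝ) :
    (dampA a lam t)⁻¹ = Real.exp (a / (lam - 1) * ((1 + t) ^ (1 - lam) - 1)) := by
  rw [dampA, ← Real.exp_neg]
  ring_nf

lemma continuousAt_dampA (ht : -1 < t) : ContinuousAt (dampA a lam) t :=
  have h₀ : 1 + t ≠ 0 := by linarith
  ((((continuousAt_const.add continuousAt_id).rpow_const (Or.inl h₀)).const_sub 1).const_mul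
    _).rexp

lemma continuousOn_dampA : ContinuousOn (dampA a lam) (Ioi (-1)) := fun _ ht =>
  (continuousAt_dampA ht).continuousWithinAt

lemma hasDerivAt_dampA (hlam : lam ≠ 1) (ht : -1 < t) :
    HasDerivAt (dampA a lam) (a / (1 + t) ^ lam * dampA a lam t) t := by
  have h₀ : 0 < 1 + t := by linarith
  have hpow : HasDerivAt (fun s : ℝ => (1 + s) ^ (1 - lam)) ((1 - lam) * (1 + t) ^ (-lam)) t := by
    simpa [sub_sub_cancel_left] using
      ((hasDerivAt_id t).const_add 1).rpow_const (p := 1 - lam) (Or.inl h₀.ne')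
  refine ((hpow.const_sub 1).const_mul (a / (lam - 1))).exp.congr_deriv ?_
  rw [Real.rpow_neg h₀.le, dampA, mul_comm]
  field_simp [sub_ne_zero.2 hlam]
  ring

lemma hasDerivAt_dampB (ht : -1 < t) : HasDerivAt (dampB a lam) (dampA a lam t)⁻¹ t := by
  have hcont : ContinuousOn (fun s => (dampA a lam s)⁻¹) (Ioi (-1)) :=
    continuousOn_dampA.inv₀ fun s _ => (dampA_pos a lam s).ne'
  rw [inv_dampA]
  simp only [inv_dampA] at hcont
  refine intervalIntegral.integral_hasDerivAt_right ?_ ?_ (hcont.continuousAt (Ioi_mem_nhds ht))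
  · exact (hcont.mono fun s hs => (lt_min (by norm_num) ht).trans_le hs.1).intervalIntegrable
  · exact hcont.stronglyMeasurableAtFilter isOpen_Ioi _ ht

lemma dampB_zero (a lam : ℝ) : dampB a lam 0 = 0 := by simp [dampB]

lemma continuousOn_dampB : ContinuousOn (dampB a lam) (Ioi (-1)) := fun _ ht =>
  (hasDerivAt_dampB ht).continuousAt.continuousWithinAt

lemma strictMonoOn_dampB : StrictMonoOn (dampB a lam) (Ici 0) := by
  refine strictMonoOn_of_deriv_pos (convex_Ici 0)
    (continuousOn_dampB.mono fun t ht => by rw [mem_Ici] at ht; rw [mem_Ioi]; linarith)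
    fun t ht => ?_
  rw [interior_Ici, mem_Ioi] at ht
  rw [(hasDerivAt_dampB (by linarith)).deriv]
  exact inv_pos.2 (dampA_pos a lam t)

end DampingFactor

section ChainRule

variable {φ φx : ℝ → ℝ → ℝ} {I : Set ℝ}

lemma isLittleO_sub_sub_partialDeriv (hdx : ∀ y, ∀ t ∈ I, HasDerivAt (φ · t) (φx y t) y)
    {y₀ t₀ : ℝ}
    (hcx : ContinuousWithinAt (fun p : ℝ × ℝ => φx p.1 p.2) (univ ×ˢ I) (y₀, t₀)) :
    (fun p : ℝ × ℝ => φ p.1 p.2 - φ y₀ p.2 - φx y₀ t₀ * (p.1 - y₀))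
      =o[𝓝[univ ×ˢ I] (y₀, t₀)] fun p => p.1 - y₀ := by
  refine isLittleO_iff.2 fun ε hε => ?_
  obtain ⟨δ, hδ, hclose⟩ := Metric.continuousWithinAt_iff.1 hcx ε hε
  filter_upwards [self_mem_nhdsWithin, inter_mem_nhdsWithin _ (Metric.ball_mem_nhds _ hδ)]
    with ⟨y, t⟩ hI hball'
  have ht : t ∈ I := hI.2
  have hyt : dist (y, t) (y₀, t₀) < δ := hball'.2
  have hball : ∀ z ∈ Metric.ball y₀ δ, dist (z, t) (y₀, t₀) < δ := fun z hz =>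
    max_lt hz (lt_of_le_of_lt (le_max_right _ _) hyt)
  have hmvt := (convex_ball y₀ δ).norm_image_sub_le_of_norm_hasDerivWithin_le
    (f := fun z => φ z t - φx y₀ t₀ * z) (f' := fun z => φx z t - φx y₀ t₀)
    (fun z _ => (((hdx z t ht).sub ((hasDerivAt_id z).const_mul _)).congr_deriv
      (by simp)).hasDerivWithinAt)
    (fun z hz => (hclose (by simpa using ht) (hball z hz)).le) (Metric.mem_ball_self hδ)
    (lt_of_le_of_lt (le_max_left _ _) hyt)
  calc ‖φ y t - φ y₀ t - φx y₀ t₀ * (y - y₀)‖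
      = ‖φ y t - φx y₀ t₀ * y - (φ y₀ t - φx y₀ t₀ * y₀)‖ := by ring_nf
    _ ≤ ε * ‖y - y₀‖ := hmvt

lemma hasDerivWithinAt_along_curve (hdx : ∀ y, ∀ t ∈ I, HasDerivAt (φ · t) (φx y t) y)
    {γ : ℝ → ℝ} {γ' φt₀ t₀ : ℝ}
    (hcx : ContinuousWithinAt (fun p : ℝ × ℝ => φx p.1 p.2) (univ ×ˢ I) (γ t₀, t₀))
    (hdt : HasDerivWithinAt (φ (γ t₀)) φt₀ I t₀) (hγ : HasDerivWithinAt γ γ' I t₀) :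
    HasDerivWithinAt (fun t => φ (γ t) t) (φx (γ t₀) t₀ * γ' + φt₀) I t₀ := by
  have hcurve : Tendsto (fun t => (γ t, t)) (𝓝[I] t₀) (𝓝[univ ×ˢ I] (γ t₀, t₀)) :=
    tendsto_nhdsWithin_iff.2 ⟨hγ.continuousWithinAt.prodMk_nhds nhdsWithin_le_nhds,
      eventually_mem_nhdsWithin.mono fun t ht => ⟨trivial, ht⟩⟩
  have hspace := ((isLittleO_sub_sub_partialDeriv hdx hcx).comp_tendsto hcurve).trans_isBigO
    (HasFDerivWithinAt.isBigO_sub hγ)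
  have hcurve' := (hasDerivWithinAt_iff_isLittleO.1 hγ).const_mul_left (φx (γ t₀) t₀)
  have htime := hasDerivWithinAt_iff_isLittleO.1 hdt
  refine hasDerivWithinAt_iff_isLittleO.2 (((hspace.add hcurve').add htime).congr_left fun t => ?_)
  simp only [Function.comp_apply, smul_eq_mul]
  ring

end ChainRule

namespace IsDampedBurgersSol

variable {a lam : ℝ} {f : ℝ → ℝ} {I : Set ℝ} {φ φx φt : ℝ → ℝ → ℝ}

lemma mono (hsol : IsDampedBurgersSol a lam f I φ φx φt) {J : Set ℝ} (hJ : J ⊆ I) :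
    IsDampedBurgersSol a lam f J φ φx φt := by
  obtain ⟨hinit, hdx, hdt, hc, hcx, hct, hpde⟩ := hsol
  have hJ' : (univ ×ˢ J : Set (ℝ × ℝ)) ⊆ univ ×ˢ I := prod_mono subset_rfl hJ
  exact ⟨hinit, fun x t ht => hdx x t (hJ ht), fun x t ht => (hdt x t (hJ ht)).mono hJ,
    hc.mono hJ', hcx.mono hJ', hct.mono hJ', fun x t ht => hpde x t (hJ ht)⟩

lemma hasDerivWithinAt_characteristic_mul_dampA (hsol : IsDampedBurgersSol a lam f I φ φx φt)
    (hlam : lam ≠ 1) (y : ℝ) {t : ℝ} (ht : t ∈ I) (ht' : -1 < t) :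
    HasDerivWithinAt (fun s => φ (y + f y * dampB a lam s) s * dampA a lam s)
      (-φx (y + f y * dampB a lam t) t *
        (φ (y + f y * dampB a lam t) t * dampA a lam t - f y)) I t := by
  obtain ⟨-, hdx, hdt, -, hcx, -, hpde⟩ := hsol
  have hγ : HasDerivWithinAt (fun s => y + f y * dampB a lam s) (f y * (dampA a lam t)⁻¹) I t :=
    (((hasDerivAt_dampB ht').const_mul (f y)).const_add y).hasDerivWithinAt
  have hcurve := hasDerivWithinAt_along_curve hdx (hcx _ ⟨trivial, ht⟩) (hdt _ t ht) hγ
  refine (hcurve.mul (hasDerivAt_dampA hlam ht').hasDerivWithinAt).congr_deriv ?_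
  rw [eq_sub_of_add_eq (hpde _ t ht)]
  field_simp [(dampA_pos a lam t).ne']
  ring

variable {T : ℝ}

lemma characteristic_mul_dampA (hsol : IsDampedBurgersSol a lam f (Ico 0 T) φ φx φt)
    (hlam : lam ≠ 1) (y : ℝ) {s : ℝ} (hs : s ∈ Ico 0 T) :
    φ (y + f y * dampB a lam s) s * dampA a lam s = f y := by
  have ⟨hinit, _, _, hcont_φ, hcont_φx, _⟩ := hsol
  set h : ℝ → ℝ := fun t => φ (y + f y * dampB a lam t) t * dampA a lam t - f y
  have hsub : Icc 0 s ⊆ Ico 0 T := Icc_subset_Ico_right hs.2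
  have hcurve : ContinuousOn (fun t => (y + f y * dampB a lam t, t)) (Icc 0 s) :=
    (continuousOn_const.add (continuousOn_const.mul (continuousOn_dampB.mono
      fun t ht => by rw [mem_Ioi]; linarith [ht.1]))).prodMk continuousOn_id
  have hmaps : MapsTo (fun t => (y + f y * dampB a lam t, t)) (Icc 0 s) (univ ×ˢ Ico 0 T) :=
    fun t ht => ⟨trivial, hsub ht⟩
  obtain ⟨K, hK⟩ := isCompact_Icc.exists_bound_of_continuousOn
    (hcont_φx.comp hcurve hmaps)
  have hcont : ContinuousOn h (Icc 0 s) :=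
    ((hcont_φ.comp hcurve hmaps).mul fun t ht =>
      (continuousAt_dampA (by linarith [ht.1])).continuousWithinAt).sub continuousOn_const
  have hderiv : ∀ t ∈ Ico 0 s, HasDerivWithinAt h
      (-φx (y + f y * dampB a lam t) t * h t) (Ici t) t := fun t ht =>
    ((hsol.hasDerivWithinAt_characteristic_mul_dampA hlam y (hsub (Ico_subset_Icc_self ht))
      (by linarith [ht.1])).sub_const (f y)).mono_of_mem_nhdsWithin
      (Ico_mem_nhdsGE_of_mem ⟨ht.1, ht.2.trans hs.2⟩)
  have h₀ : ‖h 0‖ ≤ 0 := by simp [h, dampB_zero, dampA_zero, hinit]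
  have hbound : ∀ t ∈ Ico 0 s, ‖-φx (y + f y * dampB a lam t) t * h t‖ ≤ K * ‖h t‖ + 0 :=
    fun t ht => by
      rw [add_zero, norm_mul, norm_neg]
      exact mul_le_mul_of_nonneg_right (hK t (Ico_subset_Icc_self ht)) (norm_nonneg _)
  have := norm_le_gronwallBound_of_norm_deriv_right_le hcont hderiv h₀ hbound s ⟨hs.1, le_rfl⟩
  rwa [gronwallBound_ε0_δ0, norm_le_zero_iff, sub_eq_zero] at this

lemma eq_of_characteristics_meet (hsol : IsDampedBurgersSol a lam f (Ico 0 T) φ φx φt)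
    (hlam : lam ≠ 1) {y₁ y₂ s : ℝ} (hs : s ∈ Ico 0 T)
    (hmeet : y₁ + f y₁ * dampB a lam s = y₂ + f y₂ * dampB a lam s) : y₁ = y₂ := by
  have hf : f y₁ = f y₂ := by
    rw [← hsol.characteristic_mul_dampA hlam y₁ hs, ← hsol.characteristic_mul_dampA hlam y₂ hs,
      hmeet]
  rw [hf] at hmeet
  exact add_right_cancel hmeet

end IsDampedBurgersSol

lemma exists_characteristics_meet {f B : ℝ → ℝ} {y₁ y₂ t₁ : ℝ} (ht₁ : 0 ≤ t₁)
    (hB : ContinuousOn B (Icc 0 t₁)) (hB₀ : B 0 = 0) (hBt₁ : 0 < B t₁) (hy : y₁ < y₂)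
    (hslope : slope f y₁ y₂ < -(B t₁)⁻¹) :
    ∃ s ∈ Icc 0 t₁, y₁ + f y₁ * B s = y₂ + f y₂ * B s := by
  rw [slope_def_field, div_lt_iff₀ (sub_pos.2 hy)] at hslope
  have hgap : y₂ - y₁ < B t₁ * (f y₁ - f y₂) := by
    have := mul_lt_mul_of_pos_left hslope hBt₁
    field_simp at this
    linarith
  have hdrop : 0 < f y₁ - f y₂ := pos_of_mul_pos_right ((sub_pos.2 hy).trans hgap) hBt₁.le
  obtain ⟨s, hs, hBs⟩ := intermediate_value_Icc ht₁ hB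
    (show (y₂ - y₁) / (f y₁ - f y₂) ∈ Icc (B 0) (B t₁) from
      ⟨by rw [hB₀]; exact div_nonneg (sub_pos.2 hy).le hdrop.le,
        (div_le_iff₀ hdrop).2 hgap.le⟩)
  refine ⟨s, hs, ?_⟩
  rw [hBs]
  field_simp
  ring

lemma IsDampedBurgersSol.le_of_dampB_eq {a lam c T Tstar x₀ : ℝ} {f : ℝ → ℝ}
    {φ φx φt : ℝ → ℝ → ℝ} (hsol : IsDampedBurgersSol a lam f (Ico 0 T) φ φx φt)
    (hlam : lam ≠ 1) (hc : 0 < c) (hx₀ : HasDerivAt f (-c) x₀) (hTs : 0 ≤ Tstar)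
    (hBTs : dampB a lam Tstar = 1 / c) : T ≤ Tstar := by
  by_contra! hT
  obtain ⟨t₁, hTst₁, ht₁T⟩ := exists_between hT
  have hBt₁ : c⁻¹ < dampB a lam t₁ := by
    rw [← one_div, ← hBTs]
    exact strictMonoOn_dampB hTs (mem_Ici.2 (by linarith)) (by linarith)
  obtain ⟨y, hslope, hy : x₀ < y⟩ := ((hx₀.hasDerivWithinAt.liminf_right_slope_le
    (neg_lt_neg (inv_lt_of_inv_lt₀ hc hBt₁))).and_eventually self_mem_nhdsWithin).exists
  obtain ⟨s, hs, hmeet⟩ := exists_characteristics_meet (by linarith)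
    (continuousOn_dampB.mono fun t ht => by rw [mem_Ioi]; linarith [ht.1]) (dampB_zero a lam)
    ((inv_pos.2 hc).trans hBt₁) hy hslope
  exact hy.ne (hsol.eq_of_characteristics_meet hlam ⟨hs.1, by linarith [hs.2]⟩ hmeet)

theorem stmt9_general (a lam c Tstar : ℝ) (hlam : 1 < lam) (hc : 0 < c)
    (f : ℝ → ℝ) (x₀ : ℝ) (hx₀ : deriv f x₀ = -c)
    (hTs : 0 < Tstar) (hBTs : dampB a lam Tstar = 1 / c) :
    (∀ T : ℝ, 0 < T → ∀ φ φx φt : ℝ → ℝ → ℝ,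
      IsDampedBurgersSol a lam f (Set.Ico 0 T) φ φx φt → T ≤ Tstar) ∧
    (∀ φ φx φt : ℝ → ℝ → ℝ, ¬ IsDampedBurgersSol a lam f (Set.Ici 0) φ φx φt) := by
  have hderiv : HasDerivAt f (-c) x₀ := by
    rw [← hx₀]
    exact (differentiableAt_of_deriv_ne_zero (by rw [hx₀]; linarith)).hasDerivAt
  have hlifespan : ∀ T : ℝ, ∀ φ φx φt : ℝ → ℝ → ℝ,
      IsDampedBurgersSol a lam f (Ico 0 T) φ φx φt → T ≤ Tstar := fun _ _ _ _ hsol =>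
    hsol.le_of_dampB_eq hlam.ne' hc hderiv hTs.le hBTs
  refine ⟨fun T _ => hlifespan T, fun φ φx φt hsol => ?_⟩
  have := hlifespan (Tstar + 1) φ φx φt (hsol.mono Ico_subset_Ici_self)
  linarith

/-- If the initial slope equals `−c < 0` somewhere, then any classical solution of the
damped Burgers equation on `ℝ × [0,T)` satisfies `T ≤ T_*(a,λ,c)`; in particular no
global-in-time classical solution exists. -/
theorem stmt9 (a lam c Tstar : ℝ) (hlam : 1 < lam) (hc : 0 < c)
    (f : ℝ → ℝ) (hf : ContDiff ℝ 1 f) (x₀ : ℝ) (hx₀ : deriv f x₀ = -c)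
    (hTs : 0 < Tstar) (hBTs : dampB a lam Tstar = 1 / c) :
    (∀ T : ℝ, 0 < T → ∀ φ φx φt : ℝ → ℝ → ℝ,
      IsDampedBurgersSol a lam f (Set.Ico 0 T) φ φx φt → T ≤ Tstar) ∧
    (∀ φ φx φt : ℝ → ℝ → ℝ, ¬ IsDampedBurgersSol a lam f (Set.Ici 0) φ φx φt) :=
  stmt9_general a lam c Tstar hlam hc f x₀ hx₀ hTs hBTs
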